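/- Let P3 = P1 + P2 = (x3, y3) and P4 = P1 − P2 = (x4, y4), the sum and difference being taken in the group E(K̄). Then K(x1, x2, y1·y2) = K(x1, x2, x3, x4), and moreover K_m = K_{m,x}(y1). -/

import Mathlib

/-- The short Weierstrass curve `y² = x³ + A·x + B` base-changed to `F`: its coefficients are
the images under `algebraMap K F` of `A, B ∈ K`. -/
def baseW (K F : Type*) [Field K] [Field F] [Algebra K F] (A B : K) :
    WeierstrassCurve.Affine F :=
  { a₁ := 0, a₂ := 0, a₃ := 0, a₄ := algebraMap K F A, a₆ := algebraMap K F B }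

open Classical in
/-- `K(E[m])`: the intermediate field of `F/K` generated by the coordinates of all `m`-torsion
points of the curve `W`. -/
noncomputable def torsionField (K : Type*) {F : Type*} [Field K] [Field F] [Algebra K F]
    (W : WeierstrassCurve.Affine F) (m : ℕ) : IntermediateField K F :=
  IntermediateField.adjoin K
    {c | ∃ (x y : F) (h : W.Nonsingular x y),
      m • (WeierstrassCurve.Affine.Point.some _ _ h : WeierstrassCurve.Affine.Point W) = 0 ∧
      (c = x ∨ c = y)}

open Classical in
/-- `K_{m,x}`: the intermediate field of `F/K` generated by the x-coordinates of all `m`-torsion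
points of the curve `W`. -/
noncomputable def torsionXField (K : Type*) {F : Type*} [Field K] [Field F] [Algebra K F]
    (W : WeierstrassCurve.Affine F) (m : ℕ) : IntermediateField K F :=
  IntermediateField.adjoin K
    {c | ∃ (y : F) (h : W.Nonsingular c y),
      m • (WeierstrassCurve.Affine.Point.some _ _ h : WeierstrassCurve.Affine.Point W) = 0}

open Classical in
/-- `P, Q` form a `ℤ/mℤ`-basis of the `m`-torsion subgroup `E[m]`. -/
def IsTorsionBasis {F : Type*} [Field F] {W : WeierstrassCurve.Affine F}
    (m : ℕ) (P Q : WeierstrassCurve.Affine.Point W) : Prop :=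
  m • P = 0 ∧ m • Q = 0 ∧
  (∀ R : WeierstrassCurve.Affine.Point W, m • R = 0 → ∃ a b : ℤ, R = a • P + b • Q) ∧
  (∀ a b : ℤ, a • P + b • Q = 0 → (m : ℤ) ∣ a ∧ (m : ℤ) ∣ b)

/-- The coordinatewise Galois action: the automorphism `σ` sends the point `P` to the point
`Q`. -/
def galSends {K F : Type*} [Field K] [Field F] [Algebra K F] {W : WeierstrassCurve.Affine F}
    (σ : F ≃ₐ[K] F) (P Q : WeierstrassCurve.Affine.Point W) : Prop :=
  (P = 0 ∧ Q = 0) ∨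
  (∃ (x y x' y' : F) (h : W.Nonsingular x y) (h' : W.Nonsingular x' y'),
    P = WeierstrassCurve.Affine.Point.some _ _ h ∧ Q = WeierstrassCurve.Affine.Point.some _ _ h' ∧
    σ x = x' ∧ σ y = y')

/-! On `y² = x³ + Ax + B`, two affine points with `x₁ ≠ x₂` and sum `(x₃, y₃)` satisfy
`(y₁ - y₂)² = (x₃ + x₁ + x₂)(x₁ - x₂)²` (the chord slope squared is `x₃ + x₁ + x₂`). Since `y₁²` and
`y₂²` are polynomials in `x₁` and `x₂`, this identity expresses `y₁y₂` through `x₁, x₂, x₃`, and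
conversely `x₃` through `x₁, x₂, y₁y₂`; the same holds for `x₄`, because `P₁ - P₂ = P₁ + (x₂, -y₂)`.

For `K_m`, apply the identity to `Q + P₁` with `Q = (x, y) ∈ E[m]`: then `y·y₁ ∈ K_{m,x}`, hence
`y ∈ K_{m,x}(y₁)` whenever `y₁ ≠ 0`. If `y₁ = 0`, then `P₁` has order `2`, the basis property forces
`m ∣ 2`, and every `m`-torsion point has `y = 0`. -/

open WeierstrassCurve.Affine

section ShortWeierstrass

open Classical

variable {K F : Type*} [Field K] [Field F] [Algebra K F] {A B : K}

lemma baseW_equation {x y : F} (h : (baseW K F A B).Nonsingular x y) :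
    y ^ 2 = x ^ 3 + algebraMap K F A * x + algebraMap K F B := by
  simpa [baseW, equation_iff] using h.1

lemma baseW_negY (x y : F) : (baseW K F A B).negY x y = -y := by
  simp [baseW, negY]

lemma baseW_Y_sq_mem (S : IntermediateField K F) {x y : F} (h : (baseW K F A B).Nonsingular x y)
    (hx : x ∈ S) : y ^ 2 ∈ S := by
  rw [baseW_equation h]
  exact add_mem (add_mem (pow_mem hx 3) (mul_mem (S.algebraMap_mem A) hx)) (S.algebraMap_mem B)

lemma baseW_X_ne_of_add_of_sub {x₁ y₁ x₂ y₂ x₃ y₃ x₄ y₄ : F}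
    {h₁ : (baseW K F A B).Nonsingular x₁ y₁} {h₂ : (baseW K F A B).Nonsingular x₂ y₂}
    {h₃ : (baseW K F A B).Nonsingular x₃ y₃} {h₄ : (baseW K F A B).Nonsingular x₄ y₄}
    (hadd : Point.some _ _ h₁ + Point.some _ _ h₂ = Point.some _ _ h₃)
    (hsub : Point.some _ _ h₁ - Point.some _ _ h₂ = Point.some _ _ h₄) : x₁ ≠ x₂ := by
  intro hx
  rcases Point.X_eq_iff.mp hx with heq | heq
  · rw [heq, sub_self] at hsub
    exact Point.some_ne_zero h₄ hsub.symm
  · rw [heq, neg_add_cancel] at hadd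
    exact Point.some_ne_zero h₃ hadd.symm

lemma baseW_sub_sq_of_add {x₁ y₁ x₂ y₂ x₃ y₃ : F}
    {h₁ : (baseW K F A B).Nonsingular x₁ y₁} {h₂ : (baseW K F A B).Nonsingular x₂ y₂}
    {h₃ : (baseW K F A B).Nonsingular x₃ y₃} (hx : x₁ ≠ x₂)
    (hadd : Point.some _ _ h₁ + Point.some _ _ h₂ = Point.some _ _ h₃) :
    (y₁ - y₂) ^ 2 = (x₃ + x₁ + x₂) * (x₁ - x₂) ^ 2 := by
  rw [Point.add_of_X_ne hx, Point.some.injEq] at hadd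
  rw [← hadd.1]
  simp only [addX, baseW, slope_of_X_ne hx, zero_mul, add_zero, sub_zero]
  field_simp
  ring

lemma baseW_mul_mem_of_add (S : IntermediateField K F) (h2 : (2 : F) ≠ 0)
    {x₁ y₁ x₂ y₂ x₃ y₃ : F}
    {h₁ : (baseW K F A B).Nonsingular x₁ y₁} {h₂ : (baseW K F A B).Nonsingular x₂ y₂}
    {h₃ : (baseW K F A B).Nonsingular x₃ y₃} (hx : x₁ ≠ x₂)
    (hadd : Point.some _ _ h₁ + Point.some _ _ h₂ = Point.some _ _ h₃)
    (hx₁ : x₁ ∈ S) (hx₂ : x₂ ∈ S) (hx₃ : x₃ ∈ S) : y₁ * y₂ ∈ S := by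
  have hy : y₁ * y₂ = (y₁ ^ 2 + y₂ ^ 2 - (x₃ + x₁ + x₂) * (x₁ - x₂) ^ 2) / 2 := by
    rw [← baseW_sub_sq_of_add hx hadd]
    field_simp
    ring
  rw [hy]
  refine div_mem (sub_mem (add_mem (baseW_Y_sq_mem S h₁ hx₁) (baseW_Y_sq_mem S h₂ hx₂))
    (mul_mem (add_mem (add_mem hx₃ hx₁) hx₂) (pow_mem (sub_mem hx₁ hx₂) 2))) (ofNat_mem S 2)

lemma baseW_X_mem_of_add (S : IntermediateField K F) {x₁ y₁ x₂ y₂ x₃ y₃ : F}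
    {h₁ : (baseW K F A B).Nonsingular x₁ y₁} {h₂ : (baseW K F A B).Nonsingular x₂ y₂}
    {h₃ : (baseW K F A B).Nonsingular x₃ y₃} (hx : x₁ ≠ x₂)
    (hadd : Point.some _ _ h₁ + Point.some _ _ h₂ = Point.some _ _ h₃)
    (hx₁ : x₁ ∈ S) (hx₂ : x₂ ∈ S) (hy : y₁ * y₂ ∈ S) : x₃ ∈ S := by
  have hd : x₁ - x₂ ≠ 0 := sub_ne_zero.mpr hx
  have hx₃ : x₃ = (y₁ ^ 2 + y₂ ^ 2 - 2 * (y₁ * y₂)) / (x₁ - x₂) ^ 2 - x₁ - x₂ := by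
    rw [eq_sub_iff_add_eq, eq_sub_iff_add_eq, eq_div_iff (pow_ne_zero 2 hd)]
    linear_combination -baseW_sub_sq_of_add hx hadd
  rw [hx₃]
  exact sub_mem (sub_mem (div_mem (sub_mem
    (add_mem (baseW_Y_sq_mem S h₁ hx₁) (baseW_Y_sq_mem S h₂ hx₂))
    (mul_mem (ofNat_mem S 2) hy)) (pow_mem (sub_mem hx₁ hx₂) 2)) hx₁) hx₂

theorem baseW_adjoin_X_X_mul_Y_Y_eq (h2 : (2 : F) ≠ 0) {x₁ y₁ x₂ y₂ x₃ y₃ x₄ y₄ : F}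
    {h₁ : (baseW K F A B).Nonsingular x₁ y₁} {h₂ : (baseW K F A B).Nonsingular x₂ y₂}
    {h₃ : (baseW K F A B).Nonsingular x₃ y₃} {h₄ : (baseW K F A B).Nonsingular x₄ y₄}
    (hadd : Point.some _ _ h₁ + Point.some _ _ h₂ = Point.some _ _ h₃)
    (hsub : Point.some _ _ h₁ - Point.some _ _ h₂ = Point.some _ _ h₄) :
    IntermediateField.adjoin K {x₁, x₂, y₁ * y₂} = IntermediateField.adjoin K {x₁, x₂, x₃, x₄} := by
  have hx := baseW_X_ne_of_add_of_sub hadd hsub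
  rw [sub_eq_add_neg, Point.neg_some] at hsub
  apply le_antisymm
  · set S := IntermediateField.adjoin K {x₁, x₂, x₃, x₄}
    have hS : {x₁, x₂, x₃, x₄} ⊆ (S : Set F) := IntermediateField.subset_adjoin K _
    simp only [Set.insert_subset_iff, Set.singleton_subset_iff, SetLike.mem_coe] at hS
    obtain ⟨hx₁, hx₂, hx₃, -⟩ := hS
    rw [IntermediateField.adjoin_le_iff, Set.insert_subset_iff, Set.insert_subset_iff,
      Set.singleton_subset_iff]
    exact ⟨hx₁, hx₂, baseW_mul_mem_of_add S h2 hx hadd hx₁ hx₂ hx₃⟩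
  · set S := IntermediateField.adjoin K {x₁, x₂, y₁ * y₂}
    have hS : {x₁, x₂, y₁ * y₂} ⊆ (S : Set F) := IntermediateField.subset_adjoin K _
    simp only [Set.insert_subset_iff, Set.singleton_subset_iff, SetLike.mem_coe] at hS
    obtain ⟨hx₁, hx₂, hy⟩ := hS
    have hy' : y₁ * (baseW K F A B).negY x₂ y₂ ∈ S := by
      rw [baseW_negY, mul_neg]
      exact neg_mem hy
    rw [IntermediateField.adjoin_le_iff, Set.insert_subset_iff, Set.insert_subset_iff,
      Set.insert_subset_iff, Set.singleton_subset_iff]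
    exact ⟨hx₁, hx₂, baseW_X_mem_of_add S hx hadd hx₁ hx₂ hy,
      baseW_X_mem_of_add S hx hsub hx₁ hx₂ hy'⟩

lemma baseW_two_nsmul_eq_zero_of_Y_eq_zero {x y : F} (h : (baseW K F A B).Nonsingular x y)
    (hy : y = 0) : 2 • Point.some _ _ h = 0 :=
  two_nsmul (Point.some _ _ h) ▸ Point.add_self_of_Y_eq (by rw [baseW_negY, hy, neg_zero])

lemma baseW_Y_eq_zero_of_two_nsmul_eq_zero (h2 : (2 : F) ≠ 0) {x y : F}
    (h : (baseW K F A B).Nonsingular x y) (h2P : 2 • Point.some _ _ h = 0) : y = 0 := by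
  by_contra hy
  have hne : y ≠ (baseW K F A B).negY x y := by
    rw [baseW_negY]
    intro h'
    exact hy ((mul_eq_zero.mp (by linear_combination h' : 2 * y = 0)).resolve_left h2)
  rw [two_nsmul, Point.add_self_of_Y_ne hne] at h2P
  exact Point.some_ne_zero _ h2P

end ShortWeierstrass

section Torsion

open Classical

variable {K F : Type*} [Field K] [Field F] [Algebra K F]

lemma IsTorsionBasis.dvd_of_nsmul_left_eq_zero {W : WeierstrassCurve.Affine F} {m n : ℕ}
    {P Q : Point W} (hPQ : IsTorsionBasis m P Q) (hn : n • P = 0) : m ∣ n := by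
  have := (hPQ.2.2.2 n 0 (by rw [zero_smul, add_zero, natCast_zsmul, hn])).1
  exact_mod_cast this

lemma X_mem_torsionXField {W : WeierstrassCurve.Affine F} {m : ℕ} {x y : F}
    (h : W.Nonsingular x y) (hm : m • Point.some _ _ h = 0) : x ∈ torsionXField K W m :=
  IntermediateField.subset_adjoin K _ ⟨y, h, hm⟩

lemma Y_mem_torsionField {W : WeierstrassCurve.Affine F} {m : ℕ} {x y : F}
    (h : W.Nonsingular x y) (hm : m • Point.some _ _ h = 0) : y ∈ torsionField K W m :=
  IntermediateField.subset_adjoin K _ ⟨x, y, h, hm, Or.inr rfl⟩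

lemma torsionXField_le_torsionField (W : WeierstrassCurve.Affine F) (m : ℕ) :
    torsionXField K W m ≤ torsionField K W m := by
  rw [torsionXField, IntermediateField.adjoin_le_iff]
  rintro x ⟨y, h, hm⟩
  exact IntermediateField.subset_adjoin K _ ⟨x, y, h, hm, Or.inl rfl⟩

variable {A B : K}

lemma baseW_Y_mul_Y_mem_torsionXField (h2 : (2 : F) ≠ 0) {m : ℕ} {x y x' y' : F}
    {h : (baseW K F A B).Nonsingular x y} {h' : (baseW K F A B).Nonsingular x' y'}
    (hm : m • Point.some _ _ h = 0) (hm' : m • Point.some _ _ h' = 0) :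
    y * y' ∈ torsionXField K (baseW K F A B) m := by
  set S := torsionXField K (baseW K F A B) m
  by_cases hx : x = x'
  · rcases Y_eq_of_X_eq h.1 h'.1 hx with rfl | rfl
    · rw [← sq]
      exact baseW_Y_sq_mem S h' (X_mem_torsionXField h' hm')
    · rw [baseW_negY, neg_mul, ← sq]
      exact neg_mem (baseW_Y_sq_mem S h' (X_mem_torsionXField h' hm'))
  · have hsum : m • (Point.some _ _ h + Point.some _ _ h') = 0 := by
      rw [smul_add, hm, hm', add_zero]
    rw [Point.add_of_X_ne hx] at hsum
    exact baseW_mul_mem_of_add S h2 hx (Point.add_of_X_ne (h₁ := h) (h₂ := h') hx)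
      (X_mem_torsionXField h hm) (X_mem_torsionXField h' hm') (X_mem_torsionXField _ hsum)

lemma baseW_torsionField_eq (h2 : (2 : F) ≠ 0) {m : ℕ} {x₁ y₁ x₂ y₂ : F}
    {h₁ : (baseW K F A B).Nonsingular x₁ y₁} {h₂ : (baseW K F A B).Nonsingular x₂ y₂}
    (hbasis : IsTorsionBasis m (Point.some _ _ h₁) (Point.some _ _ h₂)) :
    torsionField K (baseW K F A B) m
      = torsionXField K (baseW K F A B) m ⊔ IntermediateField.adjoin K {y₁} := by
  set Sx := torsionXField K (baseW K F A B) m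
  refine le_antisymm ?_ (sup_le (torsionXField_le_torsionField _ m)
    ((IntermediateField.adjoin_simple_le_iff).mpr (Y_mem_torsionField h₁ hbasis.1)))
  have hy₁ : y₁ ∈ Sx ⊔ IntermediateField.adjoin K {y₁} :=
    le_sup_right (α := IntermediateField K F) (IntermediateField.mem_adjoin_simple_self K y₁)
  rw [torsionField, IntermediateField.adjoin_le_iff]
  rintro c ⟨x, y, h, hm, hc | hc⟩ <;> rw [hc]
  · exact le_sup_left (α := IntermediateField K F) (X_mem_torsionXField h hm)
  by_cases hy₁0 : y₁ = 0
  · have hm2 := hbasis.dvd_of_nsmul_left_eq_zero (baseW_two_nsmul_eq_zero_of_Y_eq_zero h₁ hy₁0)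
    have h2P : 2 • Point.some _ _ h = 0 := addOrderOf_dvd_iff_nsmul_eq_zero.mp
      ((addOrderOf_dvd_iff_nsmul_eq_zero.mpr hm).trans hm2)
    rw [baseW_Y_eq_zero_of_two_nsmul_eq_zero h2 h h2P]
    exact zero_mem _
  · rw [show y = y * y₁ / y₁ ^ 2 * y₁ by field_simp]
    exact mul_mem (le_sup_left (α := IntermediateField K F) (div_mem
      (baseW_Y_mul_Y_mem_torsionXField h2 hm hbasis.1)
      (baseW_Y_sq_mem Sx h₁ (X_mem_torsionXField h₁ hbasis.1)))) hy₁

end Torsion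

open Classical in
theorem stmt1_general (K : Type*) [Field K] (hchar2 : (2 : K) ≠ 0)
    (Kbar : Type*) [Field Kbar] [Algebra K Kbar]
    (A B : K)
    (m : ℕ)
    (x1 y1 x2 y2 : Kbar)
    (h1 : (baseW K Kbar A B).Nonsingular x1 y1)
    (h2 : (baseW K Kbar A B).Nonsingular x2 y2)
    (hbasis : IsTorsionBasis m (WeierstrassCurve.Affine.Point.some _ _ h1)
      (WeierstrassCurve.Affine.Point.some _ _ h2))
    (x3 y3 x4 y4 : Kbar)
    (h3 : (baseW K Kbar A B).Nonsingular x3 y3)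
    (h4 : (baseW K Kbar A B).Nonsingular x4 y4)
    (hadd : WeierstrassCurve.Affine.Point.some _ _ h1 + WeierstrassCurve.Affine.Point.some _ _ h2
      = WeierstrassCurve.Affine.Point.some _ _ h3)
    (hsub : WeierstrassCurve.Affine.Point.some _ _ h1 - WeierstrassCurve.Affine.Point.some _ _ h2
      = WeierstrassCurve.Affine.Point.some _ _ h4) :
    IntermediateField.adjoin K {x1, x2, y1 * y2}
        = IntermediateField.adjoin K {x1, x2, x3, x4} ∧
      torsionField K (baseW K Kbar A B) m
        = torsionXField K (baseW K Kbar A B) m ⊔ IntermediateField.adjoin K {y1} := by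
  have h2' : (2 : Kbar) ≠ 0 := by
    rw [← map_ofNat (algebraMap K Kbar) 2]
    exact (map_ne_zero _).mpr hchar2
  exact ⟨baseW_adjoin_X_X_mul_Y_Y_eq h2' hadd hsub, baseW_torsionField_eq h2' hbasis⟩

open Classical in
/-- With `P₃ = P₁ + P₂ = (x₃, y₃)` and `P₄ = P₁ − P₂ = (x₄, y₄)`, one has
`K(x₁, x₂, y₁y₂) = K(x₁, x₂, x₃, x₄)` and `K_m = K_{m,x}(y₁)`. -/
theorem stmt1 (K : Type*) [Field K] (hchar2 : (2 : K) ≠ 0) (hchar3 : (3 : K) ≠ 0)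
    (Kbar : Type*) [Field Kbar] [Algebra K Kbar] [IsAlgClosure K Kbar]
    (A B : K) (hΔ : 4 * A ^ 3 + 27 * B ^ 2 ≠ 0)
    (m : ℕ) (hm : 2 ≤ m) (hmchar : (m : K) ≠ 0)
    (x1 y1 x2 y2 : Kbar)
    (h1 : (baseW K Kbar A B).Nonsingular x1 y1)
    (h2 : (baseW K Kbar A B).Nonsingular x2 y2)
    (hbasis : IsTorsionBasis m (WeierstrassCurve.Affine.Point.some _ _ h1)
      (WeierstrassCurve.Affine.Point.some _ _ h2))
    (ζ : Kbar) (hζ : IsPrimitiveRoot ζ m)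
    (x3 y3 x4 y4 : Kbar)
    (h3 : (baseW K Kbar A B).Nonsingular x3 y3)
    (h4 : (baseW K Kbar A B).Nonsingular x4 y4)
    (hadd : WeierstrassCurve.Affine.Point.some _ _ h1 + WeierstrassCurve.Affine.Point.some _ _ h2
      = WeierstrassCurve.Affine.Point.some _ _ h3)
    (hsub : WeierstrassCurve.Affine.Point.some _ _ h1 - WeierstrassCurve.Affine.Point.some _ _ h2
      = WeierstrassCurve.Affine.Point.some _ _ h4) :
    IntermediateField.adjoin K {x1, x2, y1 * y2}
        = IntermediateField.adjoin K {x1, x2, x3, x4} ∧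
      torsionField K (baseW K Kbar A B) m
        = torsionXField K (baseW K Kbar A B) m ⊔ IntermediateField.adjoin K {y1} :=
  stmt1_general K hchar2 Kbar A B m x1 y1 x2 y2 h1 h2 hbasis x3 y3 x4 y4 h3 h4 hadd hsub
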